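/- With f as above and e₁,...,eₙ a right K-basis of D, the matrix A = [f(e_i* e_j)] ∈ M_n(K) is nonsingular and hermitian, and the involution X^# = A⁻¹X*A on M_n(K) satisfies λ(a*) = λ(a)^# for all a ∈ D, where λ is the left regular representation with respect to this basis. -/

import Mathlib

open Matrix

/-- An involution on a ring: an additive, anti-multiplicative map of order at most 2. -/
def IsInvolution {R : Type*} [Ring R] (τ : R → R) : Prop :=
  (∀ a b : R, τ (a + b) = τ a + τ b) ∧ (∀ a b : R, τ (a * b) = τ b * τ a) ∧
    (∀ a : R, τ (τ a) = a)

/-- The conjugate-transpose involution on `Mₙ(D)` induced by an involution `σ` on `D`. -/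
def matStar {D : Type*} [Ring D] {n : ℕ} (σ : D → D)
    (A : Matrix (Fin n) (Fin n) D) : Matrix (Fin n) (Fin n) D :=
  (Aᵀ).map σ

/-! The Gram matrix `A` of the sesquilinear form `(x, y) ↦ f(x* y)` is hermitian because `f`
commutes with `*`. The form is nondegenerate, since `f(z z⁻¹) = 1`, so no nonzero `K`-combination
of the rows of `A` vanishes; as `Kⁿ` is finite-dimensional over the division ring `K`, `A` has a
left inverse over `K`, which is two-sided because `Mₙ(D)` is Dedekind-finite. Finally, `A λ(a*)`
and `λ(a)* A` both have entries `f(eᵢ* a* eⱼ)`. -/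

namespace IsInvolution

variable {R : Type*} [Ring R] {σ : R → R}

theorem injective (hσ : IsInvolution σ) : Function.Injective σ :=
  Function.LeftInverse.injective hσ.2.2

def toAddMonoidHom (hσ : IsInvolution σ) : R →+ R :=
  AddMonoidHom.mk' σ hσ.1

theorem map_zero (hσ : IsInvolution σ) : σ 0 = 0 :=
  hσ.toAddMonoidHom.map_zero

theorem map_sum (hσ : IsInvolution σ) {ι : Type*} (s : Finset ι) (g : ι → R) :
    σ (∑ i ∈ s, g i) = ∑ i ∈ s, σ (g i) :=
  _root_.map_sum hσ.toAddMonoidHom g s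

end IsInvolution

@[simp]
theorem matStar_apply {R : Type*} [Ring R] {n : ℕ} (σ : R → R) (M : Matrix (Fin n) (Fin n) R)
    (i j : Fin n) : matStar σ M i j = σ (M j i) :=
  rfl

theorem Subfield.exists_mul_eq_one_of_vecMul_injective {D : Type*} [DivisionRing D]
    (K : Subfield D) {m : Type*} [Fintype m] [DecidableEq m] (M : Matrix m m D)
    (hMK : ∀ i j, M i j ∈ K)
    (hinj : ∀ c : m → K, (fun i => (c i : D)) ᵥ* M = 0 → c = 0) :
    ∃ B : Matrix m m D, (∀ i j, B i j ∈ K) ∧ B * M = 1 := by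
  set MK : Matrix m m K := Matrix.of fun i j => ⟨M i j, hMK i j⟩
  have hinjK : Function.Injective MK.vecMul := by
    refine (injective_iff_map_eq_zero MK.vecMulLinear).2 fun c hc => hinj c ?_
    ext j
    calc ((fun i => (c i : D)) ᵥ* M) j = K.subtype ((c ᵥ* MK) j) :=
          (K.subtype.map_vecMul MK c j).symm
      _ = 0 := by rw [← MK.vecMulLinear_apply, hc, Pi.zero_apply, map_zero]
  obtain ⟨BK, hBK⟩ := vecMul_surjective_iff_exists_left_inverse.1
    (LinearMap.surjective_of_injective (f := MK.vecMulLinear) hinjK)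
  refine ⟨BK.map K.subtype, fun i j => (BK i j).2, ?_⟩
  change BK.map K.subtype * MK.map K.subtype = 1
  rw [← Matrix.map_mul, hBK, Matrix.map_one _ K.subtype.map_zero K.subtype.map_one]

section GramMatrix

variable {D : Type*} [DivisionRing D] {n : ℕ} {σ : D → D} {K : Subfield D} {F : D →+ D}
  {e : Fin n → D}

def gramMatrix (σ f : D → D) (e : Fin n → D) : Matrix (Fin n) (Fin n) D :=
  Matrix.of fun i j => f (σ (e i) * e j)

theorem matStar_gramMatrix (hσ : IsInvolution σ) {f : D → D}
    (hfherm : ∀ z, σ (f z) = f (σ z)) (e : Fin n → D) :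
    matStar σ (gramMatrix σ f e) = gramMatrix σ f e := by
  ext i j
  simp only [matStar_apply, gramMatrix, of_apply, hfherm, hσ.2.1, hσ.2.2]

theorem eq_zero_of_forall_map_mul_eq_zero (hF1 : F 1 = 1)
    (hFr : ∀ z, ∀ k ∈ K, F (z * k) = F z * k)
    (hspan : ∀ d : D, ∃ c : Fin n → D, (∀ i, c i ∈ K) ∧ d = ∑ i, e i * c i)
    {z : D} (hz : ∀ j, F (z * e j) = 0) : z = 0 := by
  by_contra hz0
  obtain ⟨c, hcK, hc⟩ := hspan z⁻¹
  have : F (z * z⁻¹) = 0 := by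
    simp only [hc, Finset.mul_sum, map_sum, ← mul_assoc, hFr _ _ (hcK _), hz, zero_mul,
      Finset.sum_const_zero]
  rw [mul_inv_cancel₀ hz0, hF1] at this
  exact one_ne_zero this

theorem eq_zero_of_vecMul_gramMatrix_eq_zero (hσ : IsInvolution σ)
    (hKσ : ∀ k ∈ K, σ k ∈ K) (hF1 : F 1 = 1) (hFl : ∀ k ∈ K, ∀ z, F (k * z) = k * F z)
    (hFr : ∀ z, ∀ k ∈ K, F (z * k) = F z * k)
    (hspan : ∀ d : D, ∃ c : Fin n → D, (∀ i, c i ∈ K) ∧ d = ∑ i, e i * c i)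
    (hindep : ∀ c : Fin n → D, (∀ i, c i ∈ K) → ∑ i, e i * c i = 0 → ∀ i, c i = 0)
    (c : Fin n → K) (hc : (fun i => (c i : D)) ᵥ* gramMatrix σ F e = 0) : c = 0 := by
  set z := ∑ k, (c k : D) * σ (e k)
  have hz : z = 0 := by
    refine eq_zero_of_forall_map_mul_eq_zero hF1 hFr hspan fun j => ?_
    have hj := congrFun hc j
    simp only [vecMul, dotProduct, gramMatrix, of_apply, Pi.zero_apply] at hj
    simp only [z, Finset.sum_mul, map_sum, mul_assoc, hFl _ (c _).2, hj]
  have hσz : ∑ k, e k * σ (c k) = 0 := by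
    rw [← hσ.map_zero, ← hz, hσ.map_sum]
    simp only [hσ.2.1, hσ.2.2]
  ext k
  apply hσ.injective
  rw [hindep _ (fun k => hKσ _ (c k).2) hσz k, Pi.zero_apply, ZeroMemClass.coe_zero,
    hσ.map_zero]

theorem gramMatrix_mul_apply (hFr : ∀ z, ∀ k ∈ K, F (z * k) = F z * k) {x : D}
    {M : Matrix (Fin n) (Fin n) D} (hMK : ∀ i j, M i j ∈ K)
    (hM : ∀ j, x * e j = ∑ i, e i * M i j) (i j : Fin n) :
    (gramMatrix σ F e * M) i j = F (σ (e i) * (x * e j)) := by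
  simp only [mul_apply, gramMatrix, of_apply, hM, Finset.mul_sum, map_sum, ← mul_assoc,
    hFr _ _ (hMK _ _)]

theorem matStar_mul_gramMatrix_apply (hσ : IsInvolution σ) (hKσ : ∀ k ∈ K, σ k ∈ K)
    (hFl : ∀ k ∈ K, ∀ z, F (k * z) = k * F z) {x : D} {M : Matrix (Fin n) (Fin n) D}
    (hMK : ∀ i j, M i j ∈ K) (hM : ∀ j, x * e j = ∑ i, e i * M i j) (i j : Fin n) :
    (matStar σ M * gramMatrix σ F e) i j = F (σ (x * e i) * e j) := by
  simp only [mul_apply, matStar_apply, gramMatrix, of_apply, hM, hσ.map_sum, Finset.sum_mul,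
    map_sum, hσ.2.1, mul_assoc, hFl _ (hKσ _ (hMK _ _))]

theorem gramMatrix_mul_eq_matStar_mul_gramMatrix (hσ : IsInvolution σ)
    (hKσ : ∀ k ∈ K, σ k ∈ K) (hFl : ∀ k ∈ K, ∀ z, F (k * z) = k * F z)
    (hFr : ∀ z, ∀ k ∈ K, F (z * k) = F z * k) {lam : D → Matrix (Fin n) (Fin n) D}
    (hlamK : ∀ d i j, lam d i j ∈ K)
    (hlam : ∀ (d : D) (j : Fin n), d * e j = ∑ i, e i * lam d i j)
    (d : D) : gramMatrix σ F e * lam (σ d) = matStar σ (lam d) * gramMatrix σ F e := by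
  ext i j
  rw [gramMatrix_mul_apply hFr (hlamK (σ d)) (hlam (σ d)),
    matStar_mul_gramMatrix_apply hσ hKσ hFl (hlamK d) (hlam d), hσ.2.1, mul_assoc]

end GramMatrix

/-- Let `K` be a σ-invariant maximal subfield of a division algebra `D`, `f : D → K`
a unital hermitian `K`-`K` bilinear projection, `e₁,…,eₙ` a right `K`-basis of `D` and
`λ` the left regular representation.  Then `A = [f(eᵢ* eⱼ)]` is nonsingular and
hermitian, and the involution `X^# = A⁻¹ X* A` on `Mₙ(K)` satisfies `λ(a*) = λ(a)^#`. -/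
theorem stmt_13 {D : Type*} [DivisionRing D] {n : ℕ}
    (σ : D → D) (hσ : IsInvolution σ)
    (K : Subfield D) (hKσ : ∀ k ∈ K, σ k ∈ K)
    (f : D → D) (hfK : ∀ z, f z ∈ K)
    (hfadd : ∀ z w, f (z + w) = f z + f w) (hfone : f 1 = 1)
    (hfherm : ∀ z, σ (f z) = f (σ z))
    (hfbil : ∀ k ∈ K, ∀ k' ∈ K, ∀ z, f (k * z * k') = k * f z * k')
    (e : Fin n → D)
    (hspan : ∀ d : D, ∃ c : Fin n → D, (∀ i, c i ∈ K) ∧ d = ∑ i, e i * c i)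
    (hindep : ∀ c : Fin n → D, (∀ i, c i ∈ K) → (∑ i, e i * c i) = 0 → ∀ i, c i = 0)
    (lam : D → Matrix (Fin n) (Fin n) D)
    (hlamK : ∀ d i j, lam d i j ∈ K)
    (hlam : ∀ (d : D) (j : Fin n), d * e j = ∑ i, e i * lam d i j) :
    matStar σ (Matrix.of fun i j => f (σ (e i) * e j)) =
        (Matrix.of fun i j => f (σ (e i) * e j)) ∧
      ∃ B : Matrix (Fin n) (Fin n) D, (∀ i j, B i j ∈ K) ∧
        B * (Matrix.of fun i j => f (σ (e i) * e j)) = 1 ∧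
        (Matrix.of fun i j => f (σ (e i) * e j)) * B = 1 ∧
        ∀ d : D, lam (σ d) =
          B * matStar σ (lam d) * (Matrix.of fun i j => f (σ (e i) * e j)) := by
  set F : D →+ D := AddMonoidHom.mk' f hfadd
  have hFl : ∀ k ∈ K, ∀ z, F (k * z) = k * F z := fun k hk z => by
    simpa [F] using hfbil k hk 1 K.one_mem z
  have hFr : ∀ z, ∀ k ∈ K, F (z * k) = F z * k := fun z k hk => by
    simpa [F] using hfbil 1 K.one_mem k hk z
  have hA : (Matrix.of fun i j => f (σ (e i) * e j)) = gramMatrix σ F e := rfl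
  rw [hA]
  obtain ⟨B, hBK, hBA⟩ := K.exists_mul_eq_one_of_vecMul_injective (gramMatrix σ F e)
    (fun _ _ => hfK _) (eq_zero_of_vecMul_gramMatrix_eq_zero hσ hKσ hfone hFl hFr hspan hindep)
  refine ⟨matStar_gramMatrix hσ hfherm e, B, hBK, hBA, mul_eq_one_comm.1 hBA, fun d => ?_⟩
  rw [mul_assoc, ← gramMatrix_mul_eq_matStar_mul_gramMatrix hσ hKσ hFl hFr hlamK hlam,
    ← mul_assoc, hBA, one_mul]
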